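/- Let A ⊆ O be a semi-module and suppose that φ_A(b) ∈ {0, 1} for all b ∈ Ā (the minuscule case). For τ ∈ ℤ/dℤ and 1 ≤ i < j ≤ h, define V_{i,j}(A) = {(b, k) : b ∈ Ā^i, b + k ∈ Ā^j, k ≥ 1, φ_A(b) > φ_A(b + k)}, and suppose that for all b ∈ Ā^i and b' ∈ Ā^j in the same component {τ} × ℤ one has b ≤ b' whenever i < j (A is ordered) — so that every element of Ā^j ∩ ({τ}×ℤ) exceeds every element of Ā^i ∩ ({τ}×ℤ). Then |V_{i,j}(A)| = Σ_{τ ∈ ℤ/dℤ} m_{A,τ}^j · (n' − m_{A,τ}^i), where m_{A,τ}^k = #{b ∈ Ā^k ∩ ({τ+1} × ℤ) : φ_A(b) = 1} and n' = n/h = |Ā^k ∩ ({τ}×ℤ)|. -/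

import Mathlib

/-- The set `O = (ℤ/dℤ) × ℤ`; shift the second coordinate by `k`. -/
def shiftO (d : ℕ) (a : ZMod d × ℤ) (k : ℤ) : ZMod d × ℤ := (a.1, a.2 + k)

/-- The map `f : O → O`, `f(τ, i) = (τ-1, i+m)` if `τ = 1`, else `(τ-1, i)`. -/
def fO (d m : ℕ) (a : ZMod d × ℤ) : ZMod d × ℤ :=
  if a.1 = 1 then (a.1 - 1, a.2 + (m : ℤ)) else (a.1 - 1, a.2)

/-- `A ⊆ O` is a semi-module: bounded below in each component, `A + n ⊆ A`,
`f(A) ⊆ A`, and `O = A + nℤ`. -/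
def IsSemiModule (d n m : ℕ) (A : Set (ZMod d × ℤ)) : Prop :=
  (∀ τ : ZMod d, ∃ N : ℤ, ∀ i : ℤ, (τ, i) ∈ A → N ≤ i) ∧
  (∀ a ∈ A, shiftO d a (n : ℤ) ∈ A) ∧
  (∀ a ∈ A, fO d m a ∈ A) ∧
  (∀ x : ZMod d × ℤ, ∃ a ∈ A, ∃ k : ℤ, x = shiftO d a (k * (n : ℤ)))

/-- `Ā = A \ (A + n)`. -/
def Abar (d n : ℕ) (A : Set (ZMod d × ℤ)) : Set (ZMod d × ℤ) :=
  A \ ((fun a => shiftO d a (n : ℤ)) '' A)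

/-- `O^k = {(τ, i) : i ≡ k (mod h)}` where `h = gcd(m, n)`. -/
def Omod (d h : ℕ) (k : ℤ) : Set (ZMod d × ℤ) := {a | (h : ℤ) ∣ (a.2 - k)}

/-!
Each component `{τ} × ℤ` of `Ā` meets every residue class mod `n` exactly once (in the least
element of `A` there), so `Ā^k ∩ ({τ} × ℤ)` has `n'` elements. Write `c_τ^k` for the number of
those with `φ = 1`.

In the ordered minuscule case an element `(b, l)` of `V_{i,j}` is the same as a pair `b ∈ Ā^i`,
`b' = b + l ∈ Ā^j` in one component with `φ b = 1`, `φ b' = 0`: the ordering gives `b ≤ b'`, and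
`b ≠ b'` because `i ≢ j (mod h)`. Hence `|V_{i,j}| = Σ_τ c_τ^i (n' - c_τ^j)`.

The map `b ↦ f(b) - n φ(b)` sends `Ā^k ∩ ({τ} × ℤ)` injectively, hence bijectively, onto
`Ā^k ∩ ({τ - 1} × ℤ)`. Comparing sums of second coordinates over all components gives
`n Σ_τ c_τ^k = m n'`, independent of `k`. Therefore `Σ_τ c_τ^i = Σ_τ c_τ^j`, which makes
`Σ_τ c_τ^i (n' - c_τ^j)` symmetric in `i` and `j`; reindexing `τ ↦ τ + 1` gives the claim.
-/

lemma finsum_mem_eq_ncard_of_eq_zero_or_eq_one {α : Type*} {s : Set α} (hs : s.Finite)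
    {f : α → ℤ} (hf : ∀ x ∈ s, f x = 0 ∨ f x = 1) : ∑ᶠ x ∈ s, f x = (s ∩ {x | f x = 1}).ncard := by
  classical
  have hset : s ∩ {x | f x = 1} = ↑({x ∈ hs.toFinset | f x = 1} : Finset α) := by
    ext x
    simp
  rw [hset, Set.ncard_coe_finset, finsum_mem_eq_finite_toFinset_sum _ hs, ← Finset.sum_boole]
  refine Finset.sum_congr rfl fun x hx => ?_
  rcases hf x (hs.mem_toFinset.1 hx) with hx | hx <;> simp [hx]

lemma Finset.sum_mul_sub_comm {ι : Type*} (s : Finset ι) (u v : ι → ℤ) (N : ℤ)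
    (huv : ∑ x ∈ s, u x = ∑ x ∈ s, v x) :
    ∑ x ∈ s, u x * (N - v x) = ∑ x ∈ s, v x * (N - u x) := by
  have hexpand : ∀ w z : ι → ℤ,
      ∑ x ∈ s, w x * (N - z x) = N * ∑ x ∈ s, w x - ∑ x ∈ s, w x * z x := fun w z => by
    rw [Finset.mul_sum, ← Finset.sum_sub_distrib]
    exact Finset.sum_congr rfl fun x _ => by ring
  rw [hexpand, hexpand, huv, Finset.sum_congr rfl fun x _ => mul_comm (u x) (v x)]

lemma mem_Omod_iff {d h : ℕ} {k : ℤ} {b : ZMod d × ℤ} : b ∈ Omod d h k ↔ b.2 ≡ k [ZMOD h] :=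
  Int.modEq_iff_dvd.symm.trans Int.modEq_comm

/-- `Ā^k ∩ ({τ} × ℤ)`. -/
def abarSlice (d n h : ℕ) (A : Set (ZMod d × ℤ)) (τ : ZMod d) (k : ℤ) : Set (ZMod d × ℤ) :=
  Abar d n A ∩ Omod d h k ∩ {b | b.1 = τ}

def reducedF (d n m : ℕ) (φ : ZMod d × ℤ → ℤ) (b : ZMod d × ℤ) : ZMod d × ℤ :=
  shiftO d (fO d m b) (-(φ b * n))

section reducedF

variable {d n m h : ℕ} {A : Set (ZMod d × ℤ)} {φ : ZMod d × ℤ → ℤ}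

lemma reducedF_fst (b : ZMod d × ℤ) : (reducedF d n m φ b).1 = b.1 - 1 := by
  unfold reducedF shiftO fO
  split_ifs <;> rfl

lemma reducedF_snd (b : ZMod d × ℤ) :
    (reducedF d n m φ b).2 = b.2 + (if b.1 = 1 then (m : ℤ) else 0) - φ b * n := by
  unfold reducedF shiftO fO
  split_ifs <;> simp only [add_zero] <;> ring

lemma mapsTo_reducedF_abarSlice (hhn : h ∣ n) (hhm : h ∣ m)
    (hφ : ∀ a ∈ A, shiftO d (fO d m a) (-(φ a * (n : ℤ))) ∈ Abar d n A) (τ : ZMod d) (k : ℤ) :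
    Set.MapsTo (reducedF d n m φ) (abarSlice d n h A τ k) (abarSlice d n h A (τ - 1) k) := by
  rintro b ⟨⟨hb, hbk⟩, hbτ⟩
  refine ⟨⟨hφ b hb.1, ?_⟩, by simp [reducedF_fst, hbτ.symm]⟩
  have hhn' : (h : ℤ) ∣ n := Int.natCast_dvd_natCast.2 hhn
  have hhm' : (h : ℤ) ∣ m := Int.natCast_dvd_natCast.2 hhm
  have hite : (h : ℤ) ∣ if b.1 = 1 then (m : ℤ) else 0 := by split_ifs <;> simp [hhm']
  change (h : ℤ) ∣ (reducedF d n m φ b).2 - k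
  rw [reducedF_snd, sub_right_comm, add_sub_right_comm]
  exact (hbk.add hite).sub (dvd_mul_of_dvd_right hhn' (φ b))

end reducedF

/-- `V_{i,j}(A)`, for the residues `i, j` mod `h`. -/
def descentPairs (d n h : ℕ) (A : Set (ZMod d × ℤ)) (φ : ZMod d × ℤ → ℤ) (i j : ℤ) :
    Set ((ZMod d × ℤ) × ℤ) :=
  {p | p.1 ∈ Abar d n A ∩ Omod d h i ∧ shiftO d p.1 p.2 ∈ Abar d n A ∩ Omod d h j ∧
    1 ≤ p.2 ∧ φ (shiftO d p.1 p.2) < φ p.1}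

section descentPairs

variable {d n h : ℕ} {A : Set (ZMod d × ℤ)} {φ : ZMod d × ℤ → ℤ} {i j : ℤ}

lemma image_descentPairs (hmin : ∀ b ∈ Abar d n A, φ b = 0 ∨ φ b = 1)
    (hij : ¬ i ≡ j [ZMOD h])
    (hle : ∀ b ∈ Abar d n A ∩ Omod d h i, ∀ b' ∈ Abar d n A ∩ Omod d h j,
      b.1 = b'.1 → b.2 ≤ b'.2) :
    (fun p => (p.1, shiftO d p.1 p.2)) '' descentPairs d n h A φ i j =
      ⋃ τ, (abarSlice d n h A τ i ∩ {b | φ b = 1}) ×ˢ (abarSlice d n h A τ j ∩ {b | φ b = 0}) := by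
  ext ⟨b, b'⟩
  simp only [Set.mem_image, Set.mem_iUnion, Set.mem_prod, Prod.mk.injEq]
  constructor
  · rintro ⟨p, ⟨hp, hp', -, hlt⟩, rfl, rfl⟩
    have hφ : φ p.1 = 1 ∧ φ (shiftO d p.1 p.2) = 0 := by
      rcases hmin _ hp.1 with h1 | h1 <;> rcases hmin _ hp'.1 with h2 | h2 <;> omega
    exact ⟨p.1.1, ⟨⟨hp, rfl⟩, hφ.1⟩, ⟨⟨hp', rfl⟩, hφ.2⟩⟩
  · rintro ⟨τ, ⟨⟨hb, hbτ⟩, hφb⟩, ⟨⟨hb', hbτ'⟩, hφb'⟩⟩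
    have hfst : b.1 = b'.1 := hbτ.trans hbτ'.symm
    have hshift : shiftO d b (b'.2 - b.2) = b' := Prod.ext hfst (add_sub_cancel _ _)
    have hne : b.2 ≠ b'.2 := fun heq =>
      hij ((mem_Omod_iff.1 hb.2).symm.trans (heq ▸ mem_Omod_iff.1 hb'.2))
    have hlt : b.2 < b'.2 := (hle b hb b' hb' hfst).lt_of_ne hne
    refine ⟨(b, b'.2 - b.2), ⟨hb, ?_, by dsimp only; omega, ?_⟩, rfl, hshift⟩ <;>
      dsimp only <;> rw [hshift]
    · exact hb'
    · rw [Set.mem_ofPred_eq] at hφb hφb'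
      rw [hφb, hφb']
      exact one_pos

end descentPairs

namespace IsSemiModule

variable {d n m h : ℕ} {A : Set (ZMod d × ℤ)} {φ : ZMod d × ℤ → ℤ}

lemma add_mul_mem (hA : IsSemiModule d n m A) {τ : ZMod d} {x : ℤ} (hx : (τ, x) ∈ A)
    (k : ℕ) : (τ, x + k * n) ∈ A := by
  induction k with
  | zero => simpa using hx
  | succ k ih => simpa [shiftO, add_mul, add_assoc] using hA.2.1 _ ih

lemma mem_Abar_iff_isLeast (hA : IsSemiModule d n m A) (hn : 1 ≤ n) {τ : ZMod d} {x : ℤ} :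
    (τ, x) ∈ Abar d n A ↔ IsLeast {y | (τ, y) ∈ A ∧ y ≡ x [ZMOD n]} x := by
  simp only [Abar, Set.mem_sdiff, Set.mem_image, not_exists, not_and]
  constructor
  · rintro ⟨hx, hmin⟩
    refine ⟨⟨hx, rfl⟩, fun y ⟨hy, hyx⟩ => ?_⟩
    obtain ⟨c, hc⟩ := Int.modEq_iff_dvd.1 hyx
    by_contra! hlt
    have hc1 : 1 ≤ c := by nlinarith
    refine hmin _ (hA.add_mul_mem hy (c - 1).toNat) ?_
    simp only [shiftO, Int.toNat_of_nonneg (by omega : 0 ≤ c - 1), Prod.mk.injEq, true_and]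
    linarith
  · rintro ⟨⟨hx, -⟩, hleast⟩
    refine ⟨hx, fun a ha hax => ?_⟩
    have hn' : (1 : ℤ) ≤ n := by exact_mod_cast hn
    obtain ⟨τ', y⟩ := a
    simp only [shiftO, Prod.mk.injEq] at hax
    obtain ⟨rfl, rfl⟩ := hax
    have : y + n ≤ y := hleast ⟨by simpa using ha,
      Int.modEq_iff_dvd.2 ⟨1, by ring⟩⟩
    omega

lemma exists_mem_Abar_modEq (hA : IsSemiModule d n m A) (hn : 1 ≤ n) (τ : ZMod d) (r : ℤ) :
    ∃ x, (τ, x) ∈ Abar d n A ∧ x ≡ r [ZMOD n] := by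
  obtain ⟨x, ⟨hx, hxr⟩, hleast⟩ := Int.exists_least_of_bdd
    (P := fun y => (τ, y) ∈ A ∧ y ≡ r [ZMOD n])
    (let ⟨N, hN⟩ := hA.1 τ; ⟨N, fun y hy => hN y hy.1⟩)
    (by
      obtain ⟨⟨τ', y⟩, hy, k, hk⟩ := hA.2.2.2 (τ, r)
      simp only [shiftO, Prod.mk.injEq] at hk
      obtain ⟨rfl, rfl⟩ := hk
      exact ⟨y, hy, Int.modEq_iff_dvd.2 ⟨k, by ring⟩⟩)
  refine ⟨x, (hA.mem_Abar_iff_isLeast hn).2 ⟨⟨hx, rfl⟩, fun y ⟨hy, hyx⟩ => ?_⟩, hxr⟩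
  exact hleast y ⟨hy, hyx.trans hxr⟩

lemma eq_of_mem_Abar (hA : IsSemiModule d n m A) (hn : 1 ≤ n) {τ : ZMod d} {x y : ℤ}
    (hx : (τ, x) ∈ Abar d n A) (hy : (τ, y) ∈ Abar d n A) (hxy : x ≡ y [ZMOD n]) : x = y := by
  have hsets : {z | (τ, z) ∈ A ∧ z ≡ x [ZMOD n]} = {z | (τ, z) ∈ A ∧ z ≡ y [ZMOD n]} := by
    ext z
    exact and_congr_right fun _ => ⟨fun h => h.trans hxy, fun h => h.trans hxy.symm⟩
  exact ((hA.mem_Abar_iff_isLeast hn).1 hx).unique (hsets ▸ (hA.mem_Abar_iff_isLeast hn).1 hy)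

lemma bijOn_emod_abarSlice (hA : IsSemiModule d n m A) (hn : 1 ≤ n) (hhn : h ∣ n)
    (τ : ZMod d) (k : ℤ) :
    Set.BijOn (fun b : ZMod d × ℤ => b.2 % (n : ℤ)) (abarSlice d n h A τ k)
      ↑({x ∈ Finset.Ico 0 (n : ℤ) | x ≡ k [ZMOD h]} : Finset ℤ) := by
  have hn' : (0 : ℤ) < n := by exact_mod_cast hn
  have hhn' : (h : ℤ) ∣ n := Int.natCast_dvd_natCast.2 hhn
  refine ⟨fun b ⟨⟨_, hbk⟩, _⟩ => ?_, fun b ⟨⟨hb, _⟩, hbτ⟩ b' ⟨⟨hb', _⟩, hbτ'⟩ hbb' => ?_,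
    fun r hr => ?_⟩
  · simp only [Finset.coe_filter, Finset.mem_Ico, Set.mem_ofPred_eq]
    exact ⟨⟨Int.emod_nonneg _ hn'.ne', Int.emod_lt_of_pos _ hn'⟩,
      ((Int.mod_modEq _ _).of_dvd hhn').trans (mem_Omod_iff.1 hbk)⟩
  · obtain ⟨τ₁, x⟩ := b
    obtain ⟨τ₂, y⟩ := b'
    simp only [Set.mem_ofPred_eq] at hbτ hbτ'
    subst hbτ hbτ'
    rw [hA.eq_of_mem_Abar hn hb hb' hbb']
  · simp only [Finset.coe_filter, Finset.mem_Ico, Set.mem_ofPred_eq] at hr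
    obtain ⟨⟨hr0, hrn⟩, hrk⟩ := hr
    obtain ⟨x, hx, hxr⟩ := hA.exists_mem_Abar_modEq hn τ r
    exact ⟨(τ, x), ⟨⟨hx, mem_Omod_iff.2 ((hxr.of_dvd hhn').trans hrk)⟩, rfl⟩,
      Eq.trans hxr (Int.emod_eq_of_lt hr0 hrn)⟩

lemma finite_abarSlice (hA : IsSemiModule d n m A) (hn : 1 ≤ n) (hhn : h ∣ n)
    (τ : ZMod d) (k : ℤ) : (abarSlice d n h A τ k).Finite :=
  let hbij := hA.bijOn_emod_abarSlice hn hhn τ k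
  Set.Finite.of_injOn hbij.mapsTo hbij.injOn (Finset.finite_toSet _)

lemma ncard_abarSlice (hA : IsSemiModule d n m A) (hn : 1 ≤ n) (hhn : h ∣ n)
    (τ : ZMod d) (k : ℤ) : (abarSlice d n h A τ k).ncard = n / h := by
  have hh : 0 < h := Nat.pos_of_dvd_of_pos hhn hn
  have hsplit : (((n : ℤ) : ℚ) - k) / ((h : ℤ) : ℚ) =
      (((0 : ℤ) : ℚ) - k) / ((h : ℤ) : ℚ) + ((n / h : ℕ) : ℤ) := by
    simp only [Int.cast_natCast, Int.cast_zero]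
    rw [Nat.cast_div hhn (by positivity)]
    ring
  rw [(hA.bijOn_emod_abarSlice hn hhn τ k).ncard_eq, Set.ncard_coe_finset, ← Nat.cast_inj (R := ℤ),
    Int.Ico_filter_modEq_card _ _ (by exact_mod_cast hh), hsplit, Int.ceil_add_intCast,
    add_sub_cancel_left, max_eq_left (by positivity)]

lemma injOn_reducedF (hA : IsSemiModule d n m A) (hn : 1 ≤ n) :
    Set.InjOn (reducedF d n m φ) (Abar d n A) := by
  intro b hb b' hb' hbb'
  have hfst : b.1 = b'.1 := by
    simpa [reducedF_fst] using congrArg Prod.fst hbb'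
  have hsnd := congrArg Prod.snd hbb'
  rw [reducedF_snd, reducedF_snd, hfst] at hsnd
  obtain ⟨τ, x⟩ := b
  obtain ⟨τ', y⟩ := b'
  obtain rfl : τ = τ' := hfst
  rw [hA.eq_of_mem_Abar hn hb hb' (Int.modEq_iff_dvd.2 ⟨φ (τ, y) - φ (τ, x), by linarith⟩)]

lemma bijOn_reducedF_abarSlice (hA : IsSemiModule d n m A) (hn : 1 ≤ n) (hhn : h ∣ n)
    (hhm : h ∣ m) (hφ : ∀ a ∈ A, shiftO d (fO d m a) (-(φ a * (n : ℤ))) ∈ Abar d n A)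
    (τ : ZMod d) (k : ℤ) :
    Set.BijOn (reducedF d n m φ) (abarSlice d n h A τ k) (abarSlice d n h A (τ - 1) k) := by
  have hmaps := mapsTo_reducedF_abarSlice hhn hhm hφ τ k
  have hinj : Set.InjOn (reducedF d n m φ) (abarSlice d n h A τ k) :=
    (hA.injOn_reducedF hn).mono fun b hb => hb.1.1
  have himage : reducedF d n m φ '' abarSlice d n h A τ k = abarSlice d n h A (τ - 1) k := by
    refine Set.eq_of_subset_of_ncard_le (Set.image_subset_iff.2 hmaps) ?_
      (hA.finite_abarSlice hn hhn _ _)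
    rw [hinj.ncard_image, hA.ncard_abarSlice hn hhn, hA.ncard_abarSlice hn hhn]
  exact ⟨hmaps, hinj, himage ▸ Set.surjOn_image _ _⟩

lemma mul_finsum_phi_abarSlice (hA : IsSemiModule d n m A) (hn : 1 ≤ n) (hhn : h ∣ n)
    (hhm : h ∣ m) (hφ : ∀ a ∈ A, shiftO d (fO d m a) (-(φ a * (n : ℤ))) ∈ Abar d n A)
    (τ : ZMod d) (k : ℤ) :
    (n : ℤ) * ∑ᶠ b ∈ abarSlice d n h A τ k, φ b =
      ∑ᶠ b ∈ abarSlice d n h A τ k, b.2 - ∑ᶠ b ∈ abarSlice d n h A (τ - 1) k, b.2 +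
        if τ = 1 then (m * (n / h : ℕ) : ℤ) else 0 := by
  have hfin := hA.finite_abarSlice hn hhn τ k
  rw [← finsum_mem_eq_of_bijOn _ (hA.bijOn_reducedF_abarSlice hn hhn hhm hφ τ k)
      (fun b _ => rfl : ∀ b ∈ abarSlice d n h A τ k, (reducedF d n m φ b).2 = _),
    finsum_mem_eq_finite_toFinset_sum _ hfin, finsum_mem_eq_finite_toFinset_sum _ hfin,
    finsum_mem_eq_finite_toFinset_sum _ hfin]
  have hcard : hfin.toFinset.card = n / h := by
    rw [← Set.ncard_eq_toFinset_card _ hfin, hA.ncard_abarSlice hn hhn]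
  have hsnd : ∀ b ∈ hfin.toFinset, (reducedF d n m φ b).2 =
      b.2 + (if τ = 1 then (m : ℤ) else 0) - φ b * n := by
    intro b hb
    rw [reducedF_snd, ((Set.Finite.mem_toFinset hfin).1 hb).2]
  rw [Finset.sum_congr rfl hsnd, Finset.sum_sub_distrib, Finset.sum_add_distrib,
    Finset.sum_const, hcard, ← Finset.sum_mul, nsmul_eq_mul]
  split_ifs <;> ring

lemma mul_sum_ncard_abarSlice_eq_one [NeZero d] (hA : IsSemiModule d n m A) (hn : 1 ≤ n)
    (hhn : h ∣ n) (hhm : h ∣ m)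
    (hφ : ∀ a ∈ A, shiftO d (fO d m a) (-(φ a * (n : ℤ))) ∈ Abar d n A)
    (hmin : ∀ b ∈ Abar d n A, φ b = 0 ∨ φ b = 1) (k : ℤ) :
    (n : ℤ) * ∑ τ : ZMod d, ((abarSlice d n h A τ k ∩ {b | φ b = 1}).ncard : ℤ) =
      m * (n / h : ℕ) := by
  have hcount : ∀ τ, ((abarSlice d n h A τ k ∩ {b | φ b = 1}).ncard : ℤ) =
      ∑ᶠ b ∈ abarSlice d n h A τ k, φ b := fun τ =>
    (finsum_mem_eq_ncard_of_eq_zero_or_eq_one (hA.finite_abarSlice hn hhn τ k)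
      fun b hb => hmin b hb.1.1).symm
  have hshift := (Equiv.subRight (1 : ZMod d)).sum_comp
    (fun τ => ∑ᶠ b ∈ abarSlice d n h A τ k, b.2)
  simp only [Equiv.subRight_apply] at hshift
  simp_rw [hcount, Finset.mul_sum, hA.mul_finsum_phi_abarSlice hn hhn hhm hφ]
  rw [Finset.sum_add_distrib, Finset.sum_sub_distrib, hshift, sub_self, zero_add]
  simp

lemma ncard_descentPairs [NeZero d] (hA : IsSemiModule d n m A) (hn : 1 ≤ n) (hhn : h ∣ n)
    (hmin : ∀ b ∈ Abar d n A, φ b = 0 ∨ φ b = 1) {i j : ℤ} (hij : ¬ i ≡ j [ZMOD h])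
    (hle : ∀ b ∈ Abar d n A ∩ Omod d h i, ∀ b' ∈ Abar d n A ∩ Omod d h j,
      b.1 = b'.1 → b.2 ≤ b'.2) :
    (descentPairs d n h A φ i j).ncard = ∑ τ : ZMod d,
      (abarSlice d n h A τ i ∩ {b | φ b = 1}).ncard *
        (abarSlice d n h A τ j ∩ {b | φ b = 0}).ncard := by
  have hinj : Function.Injective fun p : (ZMod d × ℤ) × ℤ => (p.1, shiftO d p.1 p.2) := by
    rintro ⟨a, l⟩ ⟨a', l'⟩ hpq
    simp only [shiftO, Prod.mk.injEq] at hpq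
    obtain ⟨rfl, -, hl⟩ := hpq
    rw [add_left_cancel hl]
  rw [← Set.ncard_image_of_injective _ hinj, image_descentPairs hmin hij hle,
    Set.ncard_iUnion_of_finite (fun τ => ((hA.finite_abarSlice hn hhn τ i).inter_of_left _).prod
      ((hA.finite_abarSlice hn hhn τ j).inter_of_left _))
      fun τ τ' hne => Set.disjoint_left.2 fun p hp hp' => hne (hp.1.1.2.symm.trans hp'.1.1.2),
    finsum_eq_sum_of_fintype]
  simp_rw [Set.ncard_prod]

lemma ncard_abarSlice_inter_eq_zero (hA : IsSemiModule d n m A) (hn : 1 ≤ n) (hhn : h ∣ n)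
    (hmin : ∀ b ∈ Abar d n A, φ b = 0 ∨ φ b = 1) (τ : ZMod d) (k : ℤ) :
    ((abarSlice d n h A τ k ∩ {b | φ b = 0}).ncard : ℤ) =
      (n / h : ℕ) - (abarSlice d n h A τ k ∩ {b | φ b = 1}).ncard := by
  have hzero : abarSlice d n h A τ k ∩ {b | φ b = 0} = abarSlice d n h A τ k \ {b | φ b = 1} := by
    ext b
    simp only [Set.mem_inter_iff, Set.mem_sdiff, Set.mem_ofPred_eq]
    refine and_congr_right fun hb => ?_
    rcases hmin b hb.1.1 with hφ | hφ <;> simp [hφ]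
  rw [hzero, ← hA.ncard_abarSlice hn hhn τ k, ← Set.ncard_inter_add_ncard_sdiff_eq_ncard _
    {b | φ b = 1} (hA.finite_abarSlice hn hhn τ k)]
  push_cast
  ring

end IsSemiModule

theorem stmt18_general (d n m : ℕ) [NeZero d] (hn : 1 ≤ n)
    (A : Set (ZMod d × ℤ)) (hA : IsSemiModule d n m A)
    (φ : ZMod d × ℤ → ℤ)
    (hφ : ∀ a ∈ A, shiftO d (fO d m a) (-(φ a * (n : ℤ))) ∈ Abar d n A)
    (hmin : ∀ b ∈ Abar d n A, φ b = 0 ∨ φ b = 1)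
    (hord : ∀ k l : ℕ, 1 ≤ k → k < l → l ≤ Nat.gcd m n →
      ∀ b ∈ Abar d n A ∩ Omod d (Nat.gcd m n) (k : ℤ),
        ∀ b' ∈ Abar d n A ∩ Omod d (Nat.gcd m n) (l : ℤ),
          b.1 = b'.1 → b.2 ≤ b'.2)
    (i j : ℕ) (hi : 1 ≤ i) (hij : i < j) (hj : j ≤ Nat.gcd m n) :
    ({p : (ZMod d × ℤ) × ℤ |
        p.1 ∈ Abar d n A ∩ Omod d (Nat.gcd m n) (i : ℤ) ∧
        shiftO d p.1 p.2 ∈ Abar d n A ∩ Omod d (Nat.gcd m n) (j : ℤ) ∧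
        1 ≤ p.2 ∧ φ (shiftO d p.1 p.2) < φ p.1}.ncard : ℤ) =
      ∑ τ : ZMod d,
        (((Abar d n A ∩ Omod d (Nat.gcd m n) (j : ℤ) ∩
            {b | b.1 = τ + 1 ∧ φ b = 1}).ncard : ℤ)) *
          (((n / Nat.gcd m n : ℕ) : ℤ) -
            ((Abar d n A ∩ Omod d (Nat.gcd m n) (i : ℤ) ∩
              {b | b.1 = τ + 1 ∧ φ b = 1}).ncard : ℤ)) := by
  set h := Nat.gcd m n
  have hhn : h ∣ n := Nat.gcd_dvd_right m n
  have hhm : h ∣ m := Nat.gcd_dvd_left m n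
  have hij' : ¬ (i : ℤ) ≡ j [ZMOD h] := fun hmod =>
    absurd (Nat.le_of_dvd (by omega) ((Nat.modEq_iff_dvd' hij.le).1 (Int.natCast_modEq_iff.1 hmod)))
      (by omega)
  have hslice : ∀ (τ : ZMod d) (k : ℤ), Abar d n A ∩ Omod d h k ∩ {b | b.1 = τ ∧ φ b = 1} =
      abarSlice d n h A τ k ∩ {b | φ b = 1} := by
    intro τ k
    rw [abarSlice, Set.ofPred_and, ← Set.inter_assoc]
  have hsum : ∑ τ : ZMod d, ((abarSlice d n h A τ i ∩ {b | φ b = 1}).ncard : ℤ) =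
      ∑ τ : ZMod d, ((abarSlice d n h A τ j ∩ {b | φ b = 1}).ncard : ℤ) :=
    mul_left_cancel₀ (by positivity) <|
      (hA.mul_sum_ncard_abarSlice_eq_one hn hhn hhm hφ hmin i).trans
        (hA.mul_sum_ncard_abarSlice_eq_one hn hhn hhm hφ hmin j).symm
  simp_rw [hslice]
  change ((descentPairs d n h A φ i j).ncard : ℤ) = _
  rw [hA.ncard_descentPairs hn hhn hmin hij' (hord i j hi hij hj), Nat.cast_sum]
  simp_rw [Nat.cast_mul, hA.ncard_abarSlice_inter_eq_zero hn hhn hmin]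
  rw [Finset.sum_mul_sub_comm _ _ _ _ hsum]
  exact (Equiv.sum_comp (Equiv.addRight (1 : ZMod d)) _).symm

/-- In the ordered minuscule case,
`|V_{i,j}(A)| = Σ_τ m_{A,τ}^j (n' − m_{A,τ}^i)` for `1 ≤ i < j ≤ h`. -/
theorem stmt18 (d n m : ℕ) [NeZero d] (hn : 1 ≤ n) (hm : 1 ≤ m)
    (A : Set (ZMod d × ℤ)) (hA : IsSemiModule d n m A)
    (φ : ZMod d × ℤ → ℤ)
    (hφ : ∀ a ∈ A, shiftO d (fO d m a) (-(φ a * (n : ℤ))) ∈ Abar d n A)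
    (hmin : ∀ b ∈ Abar d n A, φ b = 0 ∨ φ b = 1)
    (hord : ∀ k l : ℕ, 1 ≤ k → k < l → l ≤ Nat.gcd m n →
      ∀ b ∈ Abar d n A ∩ Omod d (Nat.gcd m n) (k : ℤ),
        ∀ b' ∈ Abar d n A ∩ Omod d (Nat.gcd m n) (l : ℤ),
          b.1 = b'.1 → b.2 ≤ b'.2)
    (i j : ℕ) (hi : 1 ≤ i) (hij : i < j) (hj : j ≤ Nat.gcd m n) :
    ({p : (ZMod d × ℤ) × ℤ |
        p.1 ∈ Abar d n A ∩ Omod d (Nat.gcd m n) (i : ℤ) ∧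
        shiftO d p.1 p.2 ∈ Abar d n A ∩ Omod d (Nat.gcd m n) (j : ℤ) ∧
        1 ≤ p.2 ∧ φ (shiftO d p.1 p.2) < φ p.1}.ncard : ℤ) =
      ∑ τ : ZMod d,
        (((Abar d n A ∩ Omod d (Nat.gcd m n) (j : ℤ) ∩
            {b | b.1 = τ + 1 ∧ φ b = 1}).ncard : ℤ)) *
          (((n / Nat.gcd m n : ℕ) : ℤ) -
            ((Abar d n A ∩ Omod d (Nat.gcd m n) (i : ℤ) ∩
              {b | b.1 = τ + 1 ∧ φ b = 1}).ncard : ℤ)) :=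
  stmt18_general d n m hn A hA φ hφ hmin hord i j hi hij hj
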